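/- Weak bisimilarity ≈ is an equivalence relation on A^ν (reflexive, symmetric, and transitive). -/
import Mathlib


inductive Converges {A : Type*} : Computation A → A → Prop
  | ret (a : A) : Converges (Computation.pure a) a
  | step {x : Computation A} {a : A} : Converges x a → Converges x.think a

def Diverge {A : Type*} (x : Computation A) : Prop :=
  ∃ P : Computation A → Prop, P x ∧ ∀ y, P y → ∃ y', y = Computation.think y' ∧ P y'

def WBisim {A : Type*} (x y : Computation A) : Prop :=
  ∃ R : Computation A → Computation A → Prop, R x y ∧ ∀ u v, R u v →
    (∃ a, Converges u a ∧ Converges v a) ∨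
    (∃ u' v', u = Computation.think u' ∧ v = Computation.think v' ∧ R u' v')

def ConvOrder {A : Type*} (x y : Computation A) : Prop :=
  ∃ R : Computation A → Computation A → Prop, R x y ∧ ∀ u v, R u v →
    (∃ a, Converges u a ∧ Converges v a) ∨
    (∃ u' v', u = Computation.think u' ∧ v = Computation.think v' ∧ R u' v') ∨
    (∃ u', u = Computation.think u' ∧ R u' v)

def stepInf (A : Type*) : Computation A := Computation.empty A

inductive DFinite {A : Type*} : Computation A → Prop
  | ret (a : A) : DFinite (Computation.pure a)
  | step {x : Computation A} : DFinite x → DFinite x.think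

def Finitary {A B : Type*} (F : (A → Computation B) → (A → Computation B)) : Prop :=
  ∀ f a b, Converges (F f a) b →
    ∃ l : List (A × B), (∀ p ∈ l, Converges (f p.1) p.2) ∧
      ∀ g : A → Computation B, (∀ p ∈ l, Converges (g p.1) p.2) → Converges (F g a) b

private lemma pure_ne_think {A : Type*} (a : A) (x : Computation A) :
    Computation.pure a ≠ Computation.think x := by
  intro h
  have := congrArg Computation.destruct h
  simp at this

private lemma think_inj' {A : Type*} {x y : Computation A}
    (h : Computation.think x = Computation.think y) : x = y := by
  have := congrArg Computation.destruct h
  simpa using this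

private lemma conv_pure_inv {A : Type*} {y : Computation A} {a : A} (h : Converges y a) :
    ∀ b, y = Computation.pure b → a = b := by
  induction h with
  | ret c =>
    intro b hb
    have := congrArg Computation.destruct hb
    simpa using this
  | step h ih =>
    intro b hb
    exact absurd hb.symm (pure_ne_think _ _)

private lemma conv_think_inv {A : Type*} {y : Computation A} {a : A} (h : Converges y a) :
    ∀ x, y = Computation.think x → Converges x a := by
  induction h with
  | ret c =>
    intro x hx
    exact absurd hx (pure_ne_think _ _)
  | step h ih =>
    intro x hx
    rwa [think_inj' hx] at h

private lemma conv_unique {A : Type*} {x : Computation A} {a b : A}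
    (h1 : Converges x a) (h2 : Converges x b) : a = b := by
  induction h1 with
  | ret c => exact (conv_pure_inv h2 c rfl).symm
  | step h ih => exact ih (conv_think_inv h2 _ rfl)

private lemma wbisim_transfer {A : Type*} {x y : Computation A} {a : A}
    (hw : WBisim x y) (hc : Converges x a) : Converges y a := by
  obtain ⟨R, hxy, hstep⟩ := hw
  revert hxy
  induction hc generalizing y with
  | ret b =>
    intro hxy
    rcases hstep _ _ hxy with ⟨c, hc1, hc2⟩ | ⟨u', v', hu, _, _⟩
    · rwa [conv_pure_inv hc1 b rfl] at hc2
    · exact absurd hu (pure_ne_think _ _)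
  | step h ih =>
    intro hxy
    rcases hstep _ _ hxy with ⟨c, hc1, hc2⟩ | ⟨u', v', hu, hv, hR⟩
    · rwa [conv_unique (conv_think_inv hc1 _ rfl) h] at hc2
    · rw [← think_inj' hu] at hR
      exact hv ▸ Converges.step (ih hR)

private lemma destruct_cases {A : Type*} (x : Computation A) :
    (∃ a, x = Computation.pure a) ∨ ∃ x', x = Computation.think x' := by
  cases h : x.destruct with
  | inl a => exact Or.inl ⟨a, Computation.destruct_eq_pure h⟩
  | inr x' => exact Or.inr ⟨x', Computation.destruct_eq_think h⟩

private lemma wbisim_refl {A : Type*} (x : Computation A) : WBisim x x := by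
  refine ⟨Eq, rfl, fun u v h => ?_⟩
  subst h
  rcases destruct_cases u with ⟨a, rfl⟩ | ⟨u', rfl⟩
  · exact Or.inl ⟨a, Converges.ret a, Converges.ret a⟩
  · exact Or.inr ⟨u', u', rfl, rfl, rfl⟩

private lemma wbisim_symm {A : Type*} {x y : Computation A} (h : WBisim x y) : WBisim y x := by
  obtain ⟨R, hxy, hstep⟩ := h
  refine ⟨fun u v => R v u, hxy, fun u v h => ?_⟩
  rcases hstep _ _ h with ⟨a, h1, h2⟩ | ⟨u', v', hu, hv, hR⟩
  · exact Or.inl ⟨a, h2, h1⟩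
  · exact Or.inr ⟨v', u', hv, hu, hR⟩

private lemma wbisim_trans {A : Type*} {x y z : Computation A}
    (h1 : WBisim x y) (h2 : WBisim y z) : WBisim x z := by
  refine ⟨fun u w => ∃ v, WBisim u v ∧ WBisim v w, ⟨y, h1, h2⟩, fun u w ⟨v, huv, hvw⟩ => ?_⟩
  obtain ⟨R, huv', hstep⟩ := huv
  rcases hstep _ _ huv' with ⟨a, ha1, ha2⟩ | ⟨u', v', hu, hv, hR⟩
  · exact Or.inl ⟨a, ha1, wbisim_transfer hvw ha2⟩
  · obtain ⟨S, hvw', hstepS⟩ := hvw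
    rcases hstepS _ _ hvw' with ⟨a, ha1, ha2⟩ | ⟨v'', w', hv', hw, hS⟩
    · refine Or.inl ⟨a, ?_, ha2⟩
      exact wbisim_transfer (wbisim_symm ⟨R, huv', hstep⟩) ha1
    · refine Or.inr ⟨u', w', hu, hw, v', ⟨R, hR, hstep⟩, ⟨S, ?_, hstepS⟩⟩
      have hvv : v' = v'' := think_inj' (hv.symm.trans hv')
      rwa [← hvv] at hS

theorem stmt12 {A : Type*} : Equivalence (WBisim (A := A)) :=
  ⟨wbisim_refl, wbisim_symm, wbisim_trans⟩
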